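/- arXiv:0905.1340 — 3 statements merged into one kernel-verified Lean document; each statement's English description precedes it below -/
import Mathlib

section
/- A semigroup S is an inverse semigroup (every element x has a unique y with xyx = x and yxy = y) if and only if S is regular (every element x has at least one such y) and all idempotents of S commute. -/
/-!
If idempotents commute, two inverses `y, z` of `x` coincide, because both equal `z x y`: the
idempotents `x y, y x, x z, z x` may be swapped inside `y = y (x z x) y` and `z = z (x y x) z`.

Conversely, let inverses be unique. For idempotents `e, f` with `y` the inverse of `e f`, also
`f y e` is an inverse of `e f`, so `y = f y e`, which makes `y` idempotent; an idempotent is its own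
inverse, so `e f = y` is idempotent too. Then `e f` and `f e` are both inverses of `e f`.
-/

section

variable {S : Type*} [Semigroup S]

def IsSemigroupInverse (x y : S) : Prop :=
  x * y * x = x ∧ y * x * y = y

namespace IsSemigroupInverse

variable {x y z : S}

theorem symm (h : IsSemigroupInverse x y) : IsSemigroupInverse y x :=
  ⟨h.2, h.1⟩

theorem isIdempotentElem_mul (h : IsSemigroupInverse x y) : IsIdempotentElem (x * y) := by
  rw [IsIdempotentElem, ← mul_assoc, h.1]

theorem eq_of_idempotents_commute
    (hcomm : ∀ e f : S, IsIdempotentElem e → IsIdempotentElem f → Commute e f)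
    (hy : IsSemigroupInverse x y) (hz : IsSemigroupInverse x z) : y = z := by
  have hyx_zx : Commute (y * x) (z * x) :=
    hcomm _ _ hy.symm.isIdempotentElem_mul hz.symm.isIdempotentElem_mul
  have hxz_xy : Commute (x * z) (x * y) := hcomm _ _ hz.isIdempotentElem_mul hy.isIdempotentElem_mul
  calc y = y * (x * z * x) * y := by rw [hz.1, hy.2]
    _ = y * x * (z * x) * y := by simp only [mul_assoc]
    _ = z * x * (y * x) * y := by rw [hyx_zx.eq]
    _ = z * x * y := by rw [mul_assoc (z * x), hy.2]
    _ = z * x * z * x * y := by rw [hz.2]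
    _ = z * (x * z) * (x * y) := by simp only [mul_assoc]
    _ = z * (x * y) * (x * z) := by rw [mul_assoc z, hxz_xy.eq, ← mul_assoc]
    _ = z * (x * y * x) * z := by simp only [mul_assoc]
    _ = z := by rw [hy.1, hz.2]

end IsSemigroupInverse

theorem IsIdempotentElem.isSemigroupInverse_self {e : S} (he : IsIdempotentElem e) :
    IsSemigroupInverse e e :=
  ⟨by rw [he.eq, he.eq], by rw [he.eq, he.eq]⟩

theorem IsIdempotentElem.mul_of_existsUnique_inverse
    (hu : ∀ x : S, ∃! y, IsSemigroupInverse x y) {e f : S} (he : IsIdempotentElem e)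
    (hf : IsIdempotentElem f) : IsIdempotentElem (e * f) := by
  obtain ⟨y, hy, -⟩ := hu (e * f)
  have hfye : IsSemigroupInverse (e * f) (f * y * e) := by
    constructor
    · calc e * f * (f * y * e) * (e * f) = e * (f * f) * y * (e * e * f) := by
            simp only [mul_assoc]
        _ = e * f := by rw [hf.eq, he.eq, hy.1]
    · calc f * y * e * (e * f) * (f * y * e) = f * (y * (e * e * (f * f)) * y) * e := by
            simp only [mul_assoc]
        _ = f * y * e := by rw [he.eq, hf.eq, hy.2]
  have hy_eq : f * y * e = y := (hu _).unique hfye hy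
  have hy_idem : IsIdempotentElem y :=
    calc y * y = f * y * e * (f * y * e) := by rw [hy_eq]
      _ = f * (y * (e * f) * y) * e := by simp only [mul_assoc]
      _ = y := by rw [hy.2, hy_eq]
  have hef_eq : e * f = y := (hu y).unique hy.symm hy_idem.isSemigroupInverse_self
  exact hef_eq ▸ hy_idem

theorem IsIdempotentElem.commute_of_existsUnique_inverse
    (hu : ∀ x : S, ∃! y, IsSemigroupInverse x y) {e f : S} (he : IsIdempotentElem e)
    (hf : IsIdempotentElem f) : Commute e f := by
  have hef := he.mul_of_existsUnique_inverse hu hf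
  have hfe := hf.mul_of_existsUnique_inverse hu he
  have hinv : IsSemigroupInverse (e * f) (f * e) := by
    constructor
    · calc e * f * (f * e) * (e * f) = e * (f * f) * (e * e * f) := by simp only [mul_assoc]
        _ = e * f := by rw [hf.eq, he.eq, hef.eq]
    · calc f * e * (e * f) * (f * e) = f * (e * e) * (f * f * e) := by simp only [mul_assoc]
        _ = f * e := by rw [he.eq, hf.eq, hfe.eq]
  exact (hu (e * f)).unique hef.isSemigroupInverse_self hinv

end

/-- A semigroup `S` is an inverse semigroup (every element has a unique
semigroup inverse) iff `S` is regular and all idempotents commute. -/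
theorem inverse_semigroup_iff_regular_and_idempotents_commute
    (S : Type*) [Semigroup S] :
    (∀ x : S, ∃! y : S, x * y * x = x ∧ y * x * y = y) ↔
      ((∀ x : S, ∃ y : S, x * y * x = x ∧ y * x * y = y) ∧
        ∀ e f : S, e * e = e → f * f = f → e * f = f * e) := by
  constructor
  · intro hu
    exact ⟨fun x => (hu x).exists,
      fun e f he hf => IsIdempotentElem.commute_of_existsUnique_inverse hu he hf⟩
  · rintro ⟨hreg, hcomm⟩ x
    obtain ⟨y, hy⟩ := hreg x
    exact ⟨y, hy, fun z hz => IsSemigroupInverse.eq_of_idempotents_commute hcomm hz hy⟩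
end

section
/- In the poset of the rook monoid R_n under the natural partial order (extension of partial functions), the Möbius function satisfies μ(x,y) = (-1)^{rk(y) - rk(x)} for all x ≤ y. -/
noncomputable instance rookFintype (n : ℕ) : Fintype (Fin n ≃. Fin n) :=
  Fintype.ofInjective (fun f => (f : Fin n → Option (Fin n))) DFunLike.coe_injective

/-- The rank of an injective partial function on `{1,...,n}`: the size of its
domain. -/
noncomputable def rookRank {n : ℕ} (σ : Fin n ≃. Fin n) : ℕ :=
  (Finset.univ.filter fun a => (σ a).isSome).card

/-! An element below `y` is determined by its domain, which may be any subset of `dom y`; so the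
interval `[x, y]` is a Boolean lattice on `dom y \ dom x`, and the signs `(-1) ^ (rk y - rk z)`
sum to `0` over it unless `x = y`. They therefore solve the triangular system that defines the
Möbius function, and that system has only one solution. -/

open Finset

theorem eq_of_forall_sum_Icc_eq {α M : Type*} [PartialOrder α] [Fintype α]
    [DecidableRel (α := α) (· ≤ ·)] [AddCancelCommMonoid M] {f g : α → M} {y : α}
    (h : ∀ x ≤ y, ∑ z ∈ univ.filter (fun z => x ≤ z ∧ z ≤ y), f z =
      ∑ z ∈ univ.filter (fun z => x ≤ z ∧ z ≤ y), g z) :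
    ∀ x ≤ y, f x = g x := by
  classical
  intro x
  induction x using WellFoundedGT.induction with
  | _ x ih =>
  intro hxy
  have hx : x ∈ univ.filter (fun z => x ≤ z ∧ z ≤ y) := by simp [hxy]
  have hrest : ∀ z ∈ (univ.filter (fun z => x ≤ z ∧ z ≤ y)).erase x, f z = g z := by
    intro z hz
    simp only [mem_erase, mem_filter, mem_univ, true_and] at hz
    exact ih z (lt_of_le_of_ne hz.2.1 (Ne.symm hz.1)) hz.2.2
  have := h x hxy
  rw [← add_sum_erase _ _ hx, ← add_sum_erase _ _ hx, sum_congr rfl hrest] at this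
  exact add_right_cancel this

namespace PEquiv

variable {α β : Type*}

section Restrict

variable [DecidableEq α]

def restrict (f : α ≃. β) (s : Finset α) : α ≃. β :=
  (ofSet (s : Set α)).trans f

theorem restrict_eq_some {f : α ≃. β} {s : Finset α} {a : α} {b : β} :
    f.restrict s a = some b ↔ a ∈ s ∧ f a = some b := by
  simp [restrict, trans_eq_some, ofSet_eq_some_iff]

theorem restrict_le (f : α ≃. β) (s : Finset α) : f.restrict s ≤ f :=
  fun _ _ hb => (restrict_eq_some.1 hb).2

end Restrict

variable [Fintype α]

def domFinset (f : α ≃. β) : Finset α :=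
  univ.filter fun a => (f a).isSome

theorem mem_domFinset {f : α ≃. β} {a : α} : a ∈ f.domFinset ↔ ∃ b, f a = some b := by
  simp [domFinset, Option.isSome_iff_exists]

theorem domFinset_mono {f g : α ≃. β} (h : f ≤ g) : f.domFinset ⊆ g.domFinset := by
  intro a ha
  obtain ⟨b, hb⟩ := mem_domFinset.1 ha
  exact mem_domFinset.2 ⟨b, h a b hb⟩

theorem eq_of_le_of_domFinset_subset {f g : α ≃. β} (h : f ≤ g)
    (hd : g.domFinset ⊆ f.domFinset) : f = g := by
  refine le_antisymm h fun a b hb => ?_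
  obtain ⟨c, hc⟩ := mem_domFinset.1 (hd (mem_domFinset.2 ⟨b, hb⟩))
  rwa [Option.some_injective _ ((h a c hc).symm.trans hb)] at hc

variable [DecidableEq α]

theorem le_restrict {f g : α ≃. β} {s : Finset α} (h : g ≤ f) (hs : g.domFinset ⊆ s) :
    g ≤ f.restrict s :=
  fun a b hb => restrict_eq_some.2 ⟨hs (mem_domFinset.2 ⟨b, hb⟩), h a b hb⟩

theorem domFinset_restrict (f : α ≃. β) (s : Finset α) :
    (f.restrict s).domFinset = s ∩ f.domFinset := by
  ext a
  simp [mem_domFinset, restrict_eq_some]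

theorem restrict_domFinset_of_le {f g : α ≃. β} (h : g ≤ f) : f.restrict g.domFinset = g :=
  (eq_of_le_of_domFinset_subset (le_restrict h subset_rfl)
    (by rw [domFinset_restrict]; exact inter_subset_left)).symm

theorem sum_Icc_neg_one_pow {R : Type*} [Ring R] [Fintype (α ≃. β)]
    [DecidableRel (α := α ≃. β) (· ≤ ·)] [DecidableEq (α ≃. β)] {x y : α ≃. β}
    (hxy : x ≤ y) :
    ∑ z ∈ univ.filter (fun z => x ≤ z ∧ z ≤ y), (-1 : R) ^ (#y.domFinset - #z.domFinset) =
      if x = y then 1 else 0 := by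
  set D := y.domFinset \ x.domFinset
  have hbij : ∑ z ∈ univ.filter (fun z => x ≤ z ∧ z ≤ y),
      (-1 : R) ^ (#y.domFinset - #z.domFinset) = ∑ T ∈ D.powerset, (-1 : R) ^ #T := by
    refine sum_nbij' (fun z => y.domFinset \ z.domFinset) (fun T => y.restrict (y.domFinset \ T))
      ?_ ?_ ?_ ?_ ?_
    · intro z hz
      simp only [mem_filter, mem_univ, true_and] at hz
      simpa using sdiff_subset_sdiff subset_rfl (domFinset_mono hz.1)
    · intro T hT
      rw [mem_powerset] at hT
      simp only [mem_filter, mem_univ, true_and]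
      refine ⟨le_restrict hxy (subset_sdiff.2 ⟨domFinset_mono hxy, ?_⟩), restrict_le _ _⟩
      exact disjoint_of_subset_right hT disjoint_sdiff
    · intro z hz
      simp only [mem_filter, mem_univ, true_and] at hz
      simp only [Finset.sdiff_sdiff_eq_self (domFinset_mono hz.2), restrict_domFinset_of_le hz.2]
    · intro T hT
      rw [mem_powerset] at hT
      simp only [domFinset_restrict, inter_eq_left.2 sdiff_subset]
      exact Finset.sdiff_sdiff_eq_self (hT.trans sdiff_subset)
    · intro z hz
      simp only [mem_filter, mem_univ, true_and] at hz
      rw [card_sdiff_of_subset (domFinset_mono hz.2)]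
  have hD : D = ∅ ↔ x = y := by
    rw [sdiff_eq_empty_iff_subset]
    exact ⟨eq_of_le_of_domFinset_subset hxy, fun h => h ▸ subset_rfl⟩
  have hsum := congrArg (Int.cast : ℤ → R) (sum_powerset_neg_one_pow_card (x := D))
  push_cast at hsum
  rw [hbij, hsum]
  exact if_congr hD rfl rfl

end PEquiv

open scoped Classical in
theorem rook_monoid_mobius_general (n : ℕ)
    (mu : (Fin n ≃. Fin n) → (Fin n ≃. Fin n) → ℚ)
    (hmu : ∀ x y : Fin n ≃. Fin n, x ≤ y →
      ∑ z ∈ Finset.univ.filter (fun z => x ≤ z ∧ z ≤ y), mu z y =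
        if x = y then 1 else 0) :
    ∀ x y : Fin n ≃. Fin n, x ≤ y →
      mu x y = (-1 : ℚ) ^ (rookRank y - rookRank x) := by
  intro x y hxy
  refine eq_of_forall_sum_Icc_eq (f := (mu · y))
    (g := fun z => (-1 : ℚ) ^ (rookRank y - rookRank z)) (fun w hw => ?_) x hxy
  rw [hmu w y hw]
  exact (PEquiv.sum_Icc_neg_one_pow hw).symm

open scoped Classical in
/-- In the poset of the rook monoid `R_n` under extension of partial functions
(Mathlib's partial order on `Fin n ≃. Fin n`), the Möbius function `μ`
(characterized as the inverse of the zeta function: `μ(x,y) = 0` unless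
`x ≤ y`, and `∑_{x ≤ z ≤ y} μ(z,y) = δ_{x,y}` for `x ≤ y`) satisfies
`μ(x,y) = (-1)^(rk y - rk x)` for all `x ≤ y`. -/
theorem rook_monoid_mobius (n : ℕ)
    (mu : (Fin n ≃. Fin n) → (Fin n ≃. Fin n) → ℚ)
    (hmu0 : ∀ x y : Fin n ≃. Fin n, ¬ x ≤ y → mu x y = 0)
    (hmu : ∀ x y : Fin n ≃. Fin n, x ≤ y →
      ∑ z ∈ Finset.univ.filter (fun z => x ≤ z ∧ z ≤ y), mu z y =
        if x = y then 1 else 0) :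
    ∀ x y : Fin n ≃. Fin n, x ≤ y →
      mu x y = (-1 : ℚ) ^ (rookRank y - rookRank x) :=
  rook_monoid_mobius_general n mu hmu
end

section
/- Let S be a finite inverse semigroup and ⌊s⌋ = Σ_{t ≤ s} μ(t,s)·t in ℂS. Then for all s, t ∈ S: ⌊s⌋·⌊t⌋ = ⌊st⌋ if s⁻¹s = tt⁻¹, and ⌊s⌋·⌊t⌋ = 0 otherwise. -/
/-!
Summing `⌊x⌋` over `x ≤ s` gives back `s`, by Möbius inversion with the left-hand Möbius
identity. Hence, for all `s t`, the double sums over `u ≤ s`, `v ≤ t` of `⌊u⌋⌊v⌋` and of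
`[u⁻¹u = vv⁻¹] ⌊uv⌋` both equal `st`: the first factors as `s · t`, and in the second
`(u, v) ↦ uv` is a bijection from the matched pairs onto `{x ≤ st}`, with inverse
`x ↦ (xt⁻¹, tx⁻¹x)`. Möbius inversion in each variable then identifies the summands.
-/

open Finset

structure IsInverseSemigroup {S : Type*} [Semigroup S] (inv : S → S) : Prop where
  mul_inv_mul (x : S) : x * inv x * x = x
  inv_mul_inv (x : S) : inv x * x * inv x = inv x
  eq_inv (x y : S) : x * y * x = x → y * x * y = y → y = inv x

def NaturalLE {S : Type*} [Mul S] (s t : S) : Prop := ∃ e : S, IsIdempotentElem e ∧ s = e * t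

theorem NaturalLE.mul_right {S : Type*} [Semigroup S] {x y : S} (hxy : NaturalLE x y) (z : S) :
    NaturalLE (x * z) (y * z) := by
  obtain ⟨e, he, rfl⟩ := hxy
  exact ⟨e, he, mul_assoc e y z⟩

namespace IsInverseSemigroup

variable {S : Type*} [Semigroup S] {inv : S → S} (h : IsInverseSemigroup inv)
include h

theorem inv_inv (x : S) : inv (inv x) = x :=
  (h.eq_inv _ _ (h.inv_mul_inv x) (h.mul_inv_mul x)).symm

theorem inv_eq_self {e : S} (he : IsIdempotentElem e) : inv e = e :=
  (h.eq_inv e e (by rw [he.eq, he.eq]) (by rw [he.eq, he.eq])).symm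

theorem mul_inv_mul_mul (x y : S) : x * (inv x * (x * y)) = x * y := by
  rw [← mul_assoc, ← mul_assoc, h.mul_inv_mul]

theorem inv_mul_inv_mul (x y : S) : inv x * (x * (inv x * y)) = inv x * y := by
  rw [← mul_assoc, ← mul_assoc, h.inv_mul_inv]

theorem isIdempotentElem_mul_inv (x : S) : IsIdempotentElem (x * inv x) := by
  rw [IsIdempotentElem, ← mul_assoc, h.mul_inv_mul]

theorem isIdempotentElem_inv_mul (x : S) : IsIdempotentElem (inv x * x) := by
  simpa only [h.inv_inv] using h.isIdempotentElem_mul_inv (inv x)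

/-- `f * inv (e * f) * e` is again an inverse of `e * f`, so equals `inv (e * f)`; this forces
`inv (e * f)`, and with it `e * f`, to be idempotent. -/
theorem isIdempotentElem_mul {e f : S} (he : IsIdempotentElem e) (hf : IsIdempotentElem f) :
    IsIdempotentElem (e * f) := by
  set x := inv (e * f)
  have hx : f * x * e = x := by
    refine h.eq_inv _ _ ?_ ?_
    · calc e * f * (f * x * e) * (e * f) = e * (f * f) * x * ((e * e) * f) := by
            simp only [mul_assoc]
        _ = e * f := by rw [he.eq, hf.eq, h.mul_inv_mul]
    · calc f * x * e * (e * f) * (f * x * e) = f * (x * ((e * e) * (f * f)) * x) * e := by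
            simp only [mul_assoc]
        _ = f * x * e := by rw [he.eq, hf.eq, h.inv_mul_inv]
  have hxx : IsIdempotentElem x := by
    calc x * x = f * (x * (e * f) * x) * e := by
          conv_lhs => rw [← hx]
          simp only [mul_assoc]
      _ = x := by rw [h.inv_mul_inv, hx]
  rw [← h.inv_inv (e * f)]
  rwa [h.inv_eq_self hxx]

theorem commute_of_isIdempotentElem {e f : S} (he : IsIdempotentElem e)
    (hf : IsIdempotentElem f) : Commute e f := by
  have hef := h.isIdempotentElem_mul he hf
  have hfe := h.isIdempotentElem_mul hf he
  have hinv : f * e = inv (e * f) := by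
    refine h.eq_inv _ _ ?_ ?_
    · calc e * f * (f * e) * (e * f) = e * (f * f) * ((e * e) * f) := by simp only [mul_assoc]
        _ = e * f := by rw [he.eq, hf.eq, hef.eq]
    · calc f * e * (e * f) * (f * e) = f * (e * e) * ((f * f) * e) := by simp only [mul_assoc]
        _ = f * e := by rw [he.eq, hf.eq, hfe.eq]
  exact (hinv.trans (h.inv_eq_self hef)).symm

theorem mul_inv_rev (x y : S) : inv (x * y) = inv y * inv x := by
  have key : Commute (y * inv y) (inv x * x) :=
    h.commute_of_isIdempotentElem (h.isIdempotentElem_mul_inv y) (h.isIdempotentElem_inv_mul x)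
  refine (h.eq_inv _ _ ?_ ?_).symm
  · calc x * y * (inv y * inv x) * (x * y) = x * ((y * inv y) * (inv x * x)) * y := by
          simp only [mul_assoc]
      _ = (x * inv x * x) * (y * inv y * y) := by rw [key.eq]; simp only [mul_assoc]
      _ = x * y := by rw [h.mul_inv_mul, h.mul_inv_mul]
  · calc inv y * inv x * (x * y) * (inv y * inv x)
          = inv y * ((inv x * x) * (y * inv y)) * inv x := by
          simp only [mul_assoc]
      _ = (inv y * y * inv y) * (inv x * x * inv x) := by rw [← key.eq]; simp only [mul_assoc]
      _ = inv y * inv x := by rw [h.inv_mul_inv, h.inv_mul_inv]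

theorem naturalLE_refl (x : S) : NaturalLE x x :=
  ⟨x * inv x, h.isIdempotentElem_mul_inv x, (h.mul_inv_mul x).symm⟩

theorem naturalLE_trans {x y z : S} (hxy : NaturalLE x y) (hyz : NaturalLE y z) :
    NaturalLE x z := by
  obtain ⟨e, he, rfl⟩ := hxy
  obtain ⟨f, hf, rfl⟩ := hyz
  exact ⟨e * f, h.isIdempotentElem_mul he hf, (mul_assoc e f z).symm⟩

theorem mul_naturalLE_of_isIdempotentElem {f : S} (hf : IsIdempotentElem f) (t : S) :
    NaturalLE (t * f) t := by
  have key : Commute f (inv t * t) :=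
    h.commute_of_isIdempotentElem hf (h.isIdempotentElem_inv_mul t)
  refine ⟨t * f * inv t, ?_, ?_⟩
  · calc t * f * inv t * (t * f * inv t) = t * (f * (inv t * t)) * f * inv t := by
          simp only [mul_assoc]
      _ = t * f * inv t := by rw [key.eq]; simp only [mul_assoc, hf.mul_self_mul, h.mul_inv_mul_mul]
  · calc t * f = t * ((inv t * t) * f) := by rw [← mul_assoc, ← mul_assoc, h.mul_inv_mul]
      _ = t * f * inv t * t := by rw [← key.eq]; simp only [mul_assoc]

theorem eq_mul_inv_mul_of_naturalLE {v t : S} (hvt : NaturalLE v t) : t * (inv v * v) = v := by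
  obtain ⟨e, he, rfl⟩ := hvt
  have key : Commute e (t * inv t) :=
    h.commute_of_isIdempotentElem he (h.isIdempotentElem_mul_inv t)
  calc t * (inv (e * t) * (e * t)) = (t * inv t) * (e * e) * t := by
        rw [h.mul_inv_rev, h.inv_eq_self he]; simp only [mul_assoc]
    _ = e * t := by rw [he.eq, ← key.eq, mul_assoc, h.mul_inv_mul]

theorem mul_inv_eq_of_naturalLE {v t : S} (hvt : NaturalLE v t) : v * inv t = v * inv v := by
  obtain ⟨e, he, rfl⟩ := hvt
  have key : Commute e (t * inv t) :=
    h.commute_of_isIdempotentElem he (h.isIdempotentElem_mul_inv t)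
  calc e * t * inv t = e * e * (t * inv t) := by rw [he.eq, mul_assoc]
    _ = e * (t * inv t) * e := by rw [mul_assoc e (t * inv t), ← key.eq]; simp only [mul_assoc]
    _ = e * t * inv (e * t) := by rw [h.mul_inv_rev, h.inv_eq_self he]; simp only [mul_assoc]

theorem naturalLE_mul_left {v t : S} (hvt : NaturalLE v t) (z : S) :
    NaturalLE (z * v) (z * t) := by
  rw [← h.eq_mul_inv_mul_of_naturalLE hvt, ← mul_assoc]
  exact h.mul_naturalLE_of_isIdempotentElem (h.isIdempotentElem_inv_mul v) _

theorem naturalLE_mul {u v s t : S} (hus : NaturalLE u s) (hvt : NaturalLE v t) :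
    NaturalLE (u * v) (s * t) :=
  h.naturalLE_trans (hus.mul_right v) (h.naturalLE_mul_left hvt s)

theorem inv_mul_mul_of_inv_mul_eq {u v : S} (huv : inv u * u = v * inv v) :
    inv (u * v) * (u * v) = inv v * v :=
  calc inv (u * v) * (u * v) = inv v * (inv u * u) * v := by
        rw [h.mul_inv_rev]; simp only [mul_assoc]
    _ = inv v * v := by rw [huv, ← mul_assoc, h.inv_mul_inv]

theorem mul_inv_mul_of_naturalLE_mul {x s t : S} (hx : NaturalLE x (s * t)) :
    x * inv t * t = x := by
  obtain ⟨e, -, rfl⟩ := hx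
  simp only [mul_assoc]
  rw [← mul_assoc t, h.mul_inv_mul]

open scoped Classical in
theorem sum_matched_mul_eq_sum_naturalLE_mul [Fintype S] {M : Type*} [AddCommMonoid M]
    (g : S → M) (s t : S) :
    ∑ u ∈ univ.filter (NaturalLE · s), ∑ v ∈ univ.filter (NaturalLE · t),
      (if inv u * u = v * inv v then g (u * v) else 0) =
    ∑ x ∈ univ.filter (NaturalLE · (s * t)), g x := by
  rw [← sum_product', ← sum_filter]
  refine sum_nbij' (fun p => p.1 * p.2) (fun x => (x * inv t, t * (inv x * x)))
    ?_ ?_ ?_ ?_ (fun _ _ => rfl)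
  · rintro ⟨u, v⟩ huv
    simp only [mem_filter, mem_product, mem_univ, true_and] at huv ⊢
    exact h.naturalLE_mul huv.1.1 huv.1.2
  · intro x hx
    simp only [mem_filter, mem_product, mem_univ, true_and] at hx ⊢
    refine ⟨⟨?_, h.mul_naturalLE_of_isIdempotentElem (h.isIdempotentElem_inv_mul x) t⟩, ?_⟩
    · refine h.naturalLE_trans (hx.mul_right (inv t)) ?_
      rw [mul_assoc]
      exact h.mul_naturalLE_of_isIdempotentElem (h.isIdempotentElem_mul_inv t) s
    · rw [h.mul_inv_rev, h.inv_inv, h.mul_inv_rev, h.inv_eq_self (h.isIdempotentElem_inv_mul x)]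
      simp only [mul_assoc, h.inv_mul_inv_mul]
  · rintro ⟨u, v⟩ huv
    simp only [mem_filter, mem_product, mem_univ, true_and] at huv
    obtain ⟨⟨-, hvt⟩, hm⟩ := huv
    refine Prod.ext ?_ ?_
    · rw [mul_assoc, h.mul_inv_eq_of_naturalLE hvt, ← hm, ← mul_assoc, h.mul_inv_mul]
    · rw [h.inv_mul_mul_of_inv_mul_eq hm, h.eq_mul_inv_mul_of_naturalLE hvt]
  · intro x hx
    simp only [mem_filter, mem_univ, true_and] at hx
    calc x * inv t * (t * (inv x * x)) = x * inv t * t * (inv x * x) := by simp only [mul_assoc]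
      _ = x := by rw [h.mul_inv_mul_of_naturalLE_mul hx, ← mul_assoc, h.mul_inv_mul]

end IsInverseSemigroup

section Mobius

open scoped Classical

variable {α R : Type*} [Fintype α] [CommRing R] {r : α → α → Prop} {mu : α → α → R}

theorem mobius_right_sum_eq [Std.Refl r] [IsTrans α r]
    (hmu : ∀ x y, r x y →
      ∑ z ∈ univ.filter (fun z => r x z ∧ r z y), mu z y = if x = y then 1 else 0)
    (x y : α) :
    ∑ z ∈ univ.filter (fun z => r x z ∧ r z y), mu z y = if x = y then 1 else 0 := by
  by_cases hxy : r x y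
  · exact hmu x y hxy
  · rw [if_neg (by rintro rfl; exact hxy (refl_of r x))]
    refine sum_eq_zero fun z hz => absurd ?_ hxy
    rw [mem_filter] at hz
    exact trans_of r hz.2.1 hz.2.2

variable (hmu0 : ∀ x y, ¬ r x y → mu x y = 0)
  (hmu : ∀ x y, ∑ z ∈ univ.filter (fun z => r x z ∧ r z y), mu z y = if x = y then 1 else 0)
include hmu

include hmu0 in
/-- The zeta matrix `[r a b]` has the matrix of `mu` as a right inverse, hence also as a left
inverse. -/
theorem mobius_left_sum_eq (x y : α) :
    ∑ z ∈ univ.filter (fun z => r x z ∧ r z y), mu x z = if x = y then 1 else 0 := by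
  let zeta : Matrix α α R := Matrix.of fun a b => if r a b then 1 else 0
  have hzeta : zeta * Matrix.of mu = 1 := by
    ext a b
    rw [Matrix.mul_apply, Matrix.one_apply, ← hmu, sum_filter]
    refine sum_congr rfl fun z _ => ?_
    by_cases haz : r a z <;> by_cases hzb : r z b <;> simp [zeta, haz, hzb, hmu0]
  have key : (Matrix.of mu * zeta) x y = (1 : Matrix α α R) x y := by
    rw [mul_eq_one_comm.mp hzeta]
  rw [Matrix.mul_apply, Matrix.one_apply] at key
  rw [← key, sum_filter]
  refine sum_congr rfl fun z _ => ?_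
  by_cases hxz : r x z <;> by_cases hzy : r z y <;> simp [zeta, hxz, hzy, hmu0]

theorem eq_zero_of_sum_le_eq_zero {V : Type*} [AddCommGroup V] [Module R V] {f : α → V}
    (hf : ∀ y, ∑ x ∈ univ.filter (r · y), f x = 0) (s : α) : f s = 0 :=
  calc f s = ∑ z, (∑ x ∈ univ.filter (fun x => r z x ∧ r x s), mu x s) • f z := by
        simp only [hmu, ite_smul, one_smul, zero_smul, sum_ite_eq', mem_univ, if_true]
    _ = ∑ x ∈ univ.filter (r · s), mu x s • ∑ z ∈ univ.filter (r · x), f z := by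
        simp only [sum_filter, sum_smul, smul_sum, ite_smul, smul_ite, zero_smul, smul_zero]
        rw [sum_comm]
        refine sum_congr rfl fun x _ => ?_
        by_cases hxs : r x s <;> simp [hxs]
    _ = 0 := sum_eq_zero fun x _ => by rw [hf x, smul_zero]

theorem eq_zero_of_sum_le_sum_le_eq_zero {V : Type*} [AddCommGroup V] [Module R V]
    {f : α → α → V}
    (hf : ∀ a b, ∑ u ∈ univ.filter (r · a), ∑ v ∈ univ.filter (r · b), f u v = 0)
    (u v : α) : f u v = 0 :=
  eq_zero_of_sum_le_eq_zero hmu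
    (fun b => eq_zero_of_sum_le_eq_zero hmu (f := fun u => ∑ v ∈ univ.filter (r · b), f u v)
      (fun a => hf a b) u) v

include hmu0 in
theorem sum_floor_le {floor : α → MonoidAlgebra R α}
    (hfloor : ∀ s, floor s = ∑ t ∈ univ.filter (r · s), MonoidAlgebra.single t (mu t s))
    (s : α) : ∑ x ∈ univ.filter (r · s), floor x = MonoidAlgebra.single s 1 :=
  calc ∑ x ∈ univ.filter (r · s), floor x
      = ∑ t, MonoidAlgebra.single t
          (∑ x ∈ univ.filter (fun x => r t x ∧ r x s), mu t x) := by
        simp only [hfloor, ← MonoidAlgebra.singleAddHom_apply, map_sum, sum_filter]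
        rw [sum_comm]
        refine sum_congr rfl fun x _ => ?_
        by_cases hxs : r x s <;> simp [hxs, apply_ite]
    _ = MonoidAlgebra.single s 1 := by simp [mobius_left_sum_eq hmu0 hmu, apply_ite]

end Mobius

open scoped Classical in
/-- In the semigroup algebra `ℂS` of a finite inverse semigroup `S`, the
groupoid basis elements `⌊s⌋ = ∑_{t ≤ s} μ(t,s)·t` multiply by
`⌊s⌋⌊t⌋ = ⌊st⌋` if `s⁻¹s = tt⁻¹` and `⌊s⌋⌊t⌋ = 0` otherwise. -/
theorem groupoid_basis_mul
    (S : Type*) [Semigroup S] [Fintype S]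
    (inv : S → S)
    (hinv : ∀ x : S, (x * inv x * x = x ∧ inv x * x * inv x = inv x) ∧
      ∀ y : S, x * y * x = x ∧ y * x * y = y → y = inv x)
    (le : S → S → Prop) (hle : ∀ s t : S, le s t ↔ ∃ e : S, e * e = e ∧ s = e * t)
    (mu : S → S → ℂ)
    (hmu0 : ∀ x y : S, ¬ le x y → mu x y = 0)
    (hmu : ∀ x y : S, le x y →
      ∑ z ∈ Finset.univ.filter (fun z => le x z ∧ le z y), mu z y =
        if x = y then 1 else 0)
    (floor : S → MonoidAlgebra ℂ S)
    (hfloor : ∀ s : S, floor s = ∑ t ∈ Finset.univ.filter (fun t => le t s),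
      MonoidAlgebra.single t (mu t s)) :
    ∀ s t : S,
      (inv s * s = t * inv t → floor s * floor t = floor (s * t)) ∧
      (inv s * s ≠ t * inv t → floor s * floor t = 0) := by
  obtain rfl : le = NaturalLE := funext₂ fun a b => propext (hle a b)
  have hS : IsInverseSemigroup inv :=
    ⟨fun x => (hinv x).1.1, fun x => (hinv x).1.2, fun x y h₁ h₂ => (hinv x).2 y ⟨h₁, h₂⟩⟩
  have : Std.Refl (NaturalLE (S := S)) := ⟨hS.naturalLE_refl⟩
  have : IsTrans S NaturalLE := ⟨fun _ _ _ => hS.naturalLE_trans⟩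
  have hmu' := mobius_right_sum_eq hmu
  have key : ∀ u v,
      floor u * floor v - (if inv u * u = v * inv v then floor (u * v) else 0) = 0 :=
    eq_zero_of_sum_le_sum_le_eq_zero hmu' fun a b => by
      simp only [sum_sub_distrib, ← sum_mul_sum, sum_floor_le hmu0 hmu' hfloor,
        hS.sum_matched_mul_eq_sum_naturalLE_mul, MonoidAlgebra.single_mul_single, one_mul, sub_self]
  intro s t
  have hst := sub_eq_zero.mp (key s t)
  exact ⟨fun h => hst.trans (if_pos h), fun h => hst.trans (if_neg h)⟩
end
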